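/- arXiv:1405.2509 — 5 statements merged into one kernel-verified Lean document; each statement's English description precedes it below -/
import Mathlib

section
/- Let g(t) = t^m/(1 + t + ... + t^{m-1}) = (t^{m+1} - t^m)/(t^m - 1) for m ≥ 2. Then g is convex on (0, ∞). -/
/-!
With `P = 1 + t + ⋯ + t^(m-1)` we have `t^m = (t - 1) P + 1`, so `g = t - 1 + 1/P` and it suffices
that `1/P` is convex on `(0, ∞)`, i.e. that `P P'' ≤ 2 P'^2` there. Differentiating
`P (X - 1) = X^m - 1` twice and using `(X^j - 1)(X^(m-j) - 1) = X^m + 1 - X^j - X^(m-j)` gives the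
polynomial identity `(X - 1)^2 X^2 (2 P'^2 - P P'') = (X - 1)^2 m X^m ∑_{j ≤ m} P_j P_{m-j}`,
where `P_j = 1 + X + ⋯ + X^(j-1)`. Cancelling the monic factor `(X - 1)^2` leaves a right-hand side
that is visibly nonnegative for `t > 0`.
-/

open Finset Polynomial Set

section CommRing
variable {R : Type*} [CommRing R]

theorem sum_range_succ_pow_sub_one_mul_pow_sub_one (x : R) (n : ℕ) :
    ∑ j ∈ range (n + 1), (x ^ j - 1) * (x ^ (n - j) - 1)
      = (n + 1) * (x ^ n + 1) - 2 * ∑ j ∈ range (n + 1), x ^ j := by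
  have hterm : ∀ j ∈ range (n + 1), (x ^ j - 1) * (x ^ (n - j) - 1)
      = (x ^ n + 1) - x ^ j - x ^ (n - j) := by
    intro j hj
    rw [← pow_mul_pow_sub x (Nat.le_of_lt_succ (mem_range.mp hj))]
    ring
  have hreflect := sum_range_reflect (fun j => x ^ j) (n + 1)
  simp only [Nat.add_sub_cancel] at hreflect
  rw [sum_congr rfl hterm, sum_sub_distrib, sum_sub_distrib, hreflect, sum_const, card_range,
    nsmul_eq_mul]
  push_cast
  ring

-- Multiplying by `X` and `X ^ 2` avoids the truncated exponents `n - 1` and `n - 2`.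
theorem X_mul_derivative_X_pow (n : ℕ) : X * derivative (X ^ n : R[X]) = (n : R[X]) * X ^ n := by
  rcases n with _ | n
  · simp
  · rw [derivative_X_pow, C_eq_natCast, pow_succ]; push_cast; ring

theorem X_sq_mul_derivative_derivative_X_pow (n : ℕ) :
    X ^ 2 * derivative (derivative (X ^ n : R[X])) = (n : R[X]) * ((n : R[X]) - 1) * X ^ n := by
  rcases n with _ | _ | n
  · simp
  · simp
  · rw [derivative_X_pow, derivative_C_mul_X_pow, C_mul, C_eq_natCast, C_eq_natCast]
    simp only [Nat.add_sub_cancel]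
    push_cast
    ring

variable (R) in
noncomputable def geomSumPoly (n : ℕ) : R[X] := ∑ i ∈ range n, X ^ i

theorem eval_geomSumPoly (x : R) (n : ℕ) : (geomSumPoly R n).eval x = ∑ i ∈ range n, x ^ i := by
  simp [geomSumPoly, eval_finsetSum]

theorem X_mul_derivative_geomSumPoly (n : ℕ) :
    X * (derivative (geomSumPoly R n) * (X - 1) + geomSumPoly R n) = (n : R[X]) * X ^ n := by
  have h := congrArg derivative (geom_sum_mul (X : R[X]) n)
  simp only [derivative_mul, derivative_sub, derivative_X, derivative_one, sub_zero, mul_one] at h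
  rw [geomSumPoly, h, X_mul_derivative_X_pow]

theorem X_sq_mul_derivative_derivative_geomSumPoly (n : ℕ) :
    X ^ 2 * (derivative (derivative (geomSumPoly R n)) * (X - 1)
      + 2 * derivative (geomSumPoly R n)) = (n : R[X]) * ((n : R[X]) - 1) * X ^ n := by
  have h := congrArg (fun p => derivative (derivative p)) (geom_sum_mul (X : R[X]) n)
  simp only [derivative_mul, derivative_add, derivative_sub, derivative_X, derivative_one,
    sub_zero, mul_one] at h
  rw [geomSumPoly, ← X_sq_mul_derivative_derivative_X_pow, ← h]
  ring

theorem sq_sub_one_mul_sum_geom_sum_mul_geom_sum (x : R) (n : ℕ) :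
    (x - 1) ^ 2 * ∑ j ∈ range (n + 1), (∑ i ∈ range j, x ^ i) * ∑ i ∈ range (n - j), x ^ i
      = (n + 1) * (x ^ n + 1) - 2 * ∑ j ∈ range (n + 1), x ^ j := by
  rw [← sum_range_succ_pow_sub_one_mul_pow_sub_one, mul_sum]
  refine sum_congr rfl fun j _ => ?_
  rw [← geom_sum_mul, ← geom_sum_mul]
  ring

theorem X_sq_mul_two_mul_derivative_sq_sub_mul_derivative_derivative_geomSumPoly (n : ℕ) :
    X ^ 2 * (2 * derivative (geomSumPoly R n) ^ 2
        - geomSumPoly R n * derivative (derivative (geomSumPoly R n)))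
      = (n : R[X]) * X ^ n * ∑ j ∈ range (n + 1), geomSumPoly R j * geomSumPoly R (n - j) := by
  apply ((monic_X_sub_C (1 : R)).pow 2).isRegular.left
  have h0 : geomSumPoly R n * (X - 1) = X ^ n - 1 := geom_sum_mul X n
  have h1 := X_mul_derivative_geomSumPoly (R := R) n
  have h2 := X_sq_mul_derivative_derivative_geomSumPoly (R := R) n
  have hS : (X - 1) ^ 2 * ∑ j ∈ range (n + 1), geomSumPoly R j * geomSumPoly R (n - j)
      = ((n : R[X]) + 1) * (X ^ n + 1) - 2 * ∑ j ∈ range (n + 1), X ^ j :=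
    sq_sub_one_mul_sum_geom_sum_mul_geom_sum X n
  have hsucc : ∑ j ∈ range (n + 1), (X : R[X]) ^ j = X * geomSumPoly R n + 1 := geom_sum_succ
  simp only [map_one]
  set P := geomSumPoly R n
  linear_combination (2 * X * derivative P * (X - 1) + 2 * (n : R[X]) * X ^ n) * h1
    - P * (X - 1) * h2 - (n : R[X]) * (n - 1) * X ^ n * h0 - (n : R[X]) * X ^ n * hS
    + 2 * (n : R[X]) * X ^ n * hsucc

end CommRing

theorem eval_geomSumPoly_mul_eval_derivative_derivative_le {x : ℝ} (hx : 0 < x) (n : ℕ) :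
    (geomSumPoly ℝ n).eval x * (derivative (derivative (geomSumPoly ℝ n))).eval x
      ≤ 2 * (derivative (geomSumPoly ℝ n)).eval x ^ 2 := by
  have h := congrArg (eval x)
    (X_sq_mul_two_mul_derivative_sq_sub_mul_derivative_derivative_geomSumPoly (R := ℝ) n)
  simp only [eval_mul, eval_sub, eval_pow, eval_X, eval_natCast, eval_ofNat, eval_finsetSum,
    eval_geomSumPoly] at h
  have hnonneg : 0 ≤ x ^ 2 * (2 * (derivative (geomSumPoly ℝ n)).eval x ^ 2
      - (geomSumPoly ℝ n).eval x * (derivative (derivative (geomSumPoly ℝ n))).eval x) := by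
    rw [eval_geomSumPoly, h]; positivity
  exact sub_nonneg.1 ((mul_nonneg_iff_of_pos_left (by positivity)).1 hnonneg)

theorem convexOn_inv_of_hasDerivAt {s : Set ℝ} (hs : Convex ℝ s) (hso : IsOpen s)
    {f f' f'' : ℝ → ℝ} (hf : ∀ x ∈ s, HasDerivAt f (f' x) x)
    (hf' : ∀ x ∈ s, HasDerivAt f' (f'' x) x) (hpos : ∀ x ∈ s, 0 < f x)
    (h : ∀ x ∈ s, f x * f'' x ≤ 2 * f' x ^ 2) : ConvexOn ℝ s fun x => (f x)⁻¹ := by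
  refine convexOn_of_hasDerivWithinAt2_nonneg hs (f' := fun x => -f' x / f x ^ 2)
    (f'' := fun x => (2 * f' x ^ 2 - f x * f'' x) / f x ^ 3) ?_ ?_ ?_ ?_
  · exact fun x hx => ((hf x hx).continuousAt.inv₀ (hpos x hx).ne').continuousWithinAt
  all_goals rw [hso.interior_eq]
  · exact fun x hx => ((hf x hx).inv (hpos x hx).ne').hasDerivWithinAt
  · intro x hx
    have hfx := (hpos x hx).ne'
    refine (((hf' x hx).neg.div ((hf x hx).pow 2) (pow_ne_zero 2 hfx)).congr_deriv
      ?_).hasDerivWithinAt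
    simp only [Pi.pow_apply, Pi.neg_apply]
    field_simp
    ring
  · exact fun x hx => div_nonneg (sub_nonneg.2 (h x hx)) (pow_pos (hpos x hx) 3).le

theorem convexOn_inv_geom_sum {n : ℕ} (hn : n ≠ 0) :
    ConvexOn ℝ (Ioi 0) fun x : ℝ => (∑ i ∈ range n, x ^ i)⁻¹ := by
  simp only [← eval_geomSumPoly]
  exact convexOn_inv_of_hasDerivAt (convex_Ioi 0) isOpen_Ioi
    (fun x _ => Polynomial.hasDerivAt _ x) (fun x _ => Polynomial.hasDerivAt _ x)
    (fun x hx => by rw [eval_geomSumPoly]; exact geom_sum_pos hx.le hn)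
    (fun x hx => eval_geomSumPoly_mul_eval_derivative_derivative_le hx n)

/-- For an integer `m ≥ 2`, the function `g(t) = t^m / (1 + t + ⋯ + t^{m-1})`
is convex on `(0, ∞)`. -/
theorem stmt0 (m : ℕ) (hm : 2 ≤ m) :
    ConvexOn ℝ (Set.Ioi (0 : ℝ)) (fun t => t ^ m / ∑ k ∈ Finset.range m, t ^ k) := by
  have hm0 : m ≠ 0 := by omega
  refine (((convexOn_id (convex_Ioi 0)).add (convexOn_inv_geom_sum hm0)).add_const (-1)).congr
    fun t ht => ?_
  have hP : (∑ k ∈ range m, t ^ k) ≠ 0 := (geom_sum_pos (le_of_lt ht) hm0).ne'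
  simp only [Pi.add_apply, id_eq]
  field_simp
  linear_combination geom_sum_mul t m
end

section
/- For positive semidefinite matrices A, B ∈ M_n(ℂ), there exists a unitary V ∈ M_n(ℂ) such that |BA| ≤ (A² + V B² V*)/2 in the Loewner order. -/
/-! Let `BA = M |BA|` be a polar decomposition. Since `|BA|` is Hermitian,
`|BA| = M* B A = A B M`, and therefore
`A² + M* B² M - 2 |BA| = (A - B M)* (A - B M) ≥ 0`; take `V = M*`. -/

open scoped ComplexOrder Matrix

/-- The absolute value `|X| = (X* X)^{1/2}` of a complex matrix. -/
noncomputable def matAbs {n : ℕ} (X : Matrix (Fin n) (Fin n) ℂ) : Matrix (Fin n) (Fin n) ℂ :=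
  (Matrix.posSemidef_conjTranspose_mul_self X).1.eigenvectorUnitary.1 *
    Matrix.diagonal ((↑) ∘ (√·) ∘ (Matrix.posSemidef_conjTranspose_mul_self X).1.eigenvalues) *
    (star (Matrix.posSemidef_conjTranspose_mul_self X).1.eigenvectorUnitary : Matrix (Fin n) (Fin n) ℂ)

theorem LinearMap.exists_linearIsometry_comp_eq_of_norm_eq {𝕜 E V : Type*} [RCLike 𝕜]
    [AddCommGroup E] [Module 𝕜 E] [NormedAddCommGroup V] [InnerProductSpace 𝕜 V]
    [FiniteDimensional 𝕜 V] (P T : E →ₗ[𝕜] V) (h : ∀ v, ‖P v‖ = ‖T v‖) :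
    ∃ U : V →ₗᵢ[𝕜] V, ∀ v, U (P v) = T v := by
  have hker : ker P ≤ ker T := fun v hv => by
    rw [mem_ker, ← norm_eq_zero, ← h, mem_ker.mp hv, norm_zero]
  let L : range P →ₗ[𝕜] V := (ker P).liftQ T hker ∘ₗ P.quotKerEquivRange.symm.toLinearMap
  have hL : ∀ v, L ⟨P v, mem_range_self P v⟩ = T v := fun v => by
    simp [L, P.quotKerEquivRange_symm_apply_image]
  have hL_norm : ∀ s, ‖L s‖ = ‖s‖ := by
    rintro ⟨_, v, rfl⟩
    rw [hL, ← h]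
    rfl
  exact ⟨LinearIsometry.extend ⟨L, hL_norm⟩,
    fun v => (LinearIsometry.extend_apply _ ⟨P v, mem_range_self P v⟩).trans (hL v)⟩

theorem Matrix.exists_mem_unitaryGroup_mul_eq_of_conjTranspose_mul_self_eq {𝕜 n : Type*}
    [RCLike 𝕜] [Fintype n] [DecidableEq n] {P X : Matrix n n 𝕜} (h : Pᴴ * P = Xᴴ * X) :
    ∃ M ∈ unitaryGroup n 𝕜, M * P = X := by
  let Φ := toEuclideanCLM (𝕜 := 𝕜) (n := n)
  have h' : star (Φ P) * Φ P = star (Φ X) * Φ X := by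
    simpa only [← star_eq_conjTranspose, ← map_star, ← map_mul] using congrArg Φ h
  have hnorm : ∀ v, ‖Φ P v‖ = ‖Φ X v‖ := fun v => by
    rw [ContinuousLinearMap.apply_norm_eq_sqrt_inner_adjoint_left,
      ContinuousLinearMap.apply_norm_eq_sqrt_inner_adjoint_left]
    exact congrArg (fun T => √(RCLike.re (inner 𝕜 (T v) v))) h'
  obtain ⟨U, hU⟩ := LinearMap.exists_linearIsometry_comp_eq_of_norm_eq (Φ P).toLinearMap
    (Φ X).toLinearMap hnorm
  refine ⟨Φ.symm U.toContinuousLinearMap, ?_, ?_⟩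
  · rw [mem_unitaryGroup_iff', ← (EquivLike.injective Φ).eq_iff, map_mul, map_star, map_one,
      StarAlgEquiv.apply_symm_apply, ContinuousLinearMap.star_eq_adjoint]
    exact U.toContinuousLinearMap.norm_map_iff_adjoint_comp_self.mp U.norm_map
  · apply EquivLike.injective Φ
    rw [map_mul, StarAlgEquiv.apply_symm_apply]
    ext1 v
    exact hU v

theorem star_sub_mul_mul_self_sub_mul {R : Type*} [Ring R] [StarRing R] {a b : R}
    (ha : IsSelfAdjoint a) (hb : IsSelfAdjoint b) (m : R) :
    star (a - b * m) * (a - b * m) = a ^ 2 + star m * b ^ 2 * m - (star m * b * a + a * b * m) := by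
  rw [star_sub, star_mul, ha.star_eq, hb.star_eq]
  noncomm_ring

theorem matAbs_posSemidef {n : ℕ} (X : Matrix (Fin n) (Fin n) ℂ) : (matAbs X).PosSemidef :=
  (Matrix.posSemidef_diagonal_iff.mpr fun _ => by simp).mul_mul_conjTranspose_same _

theorem matAbs_mul_self {n : ℕ} (X : Matrix (Fin n) (Fin n) ℂ) :
    matAbs X * matAbs X = Xᴴ * X := by
  have hX := Matrix.posSemidef_conjTranspose_mul_self X
  rw [matAbs, ← Unitary.conjStarAlgAut_apply (S := ℂ), ← map_mul, Matrix.diagonal_mul_diagonal]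
  conv_rhs => rw [hX.1.spectral_theorem]
  congr 2 with i
  simp [← Complex.ofReal_mul, Real.mul_self_sqrt (hX.eigenvalues_nonneg i)]

theorem exists_mem_unitaryGroup_mul_matAbs_eq {n : ℕ} (X : Matrix (Fin n) (Fin n) ℂ) :
    ∃ M ∈ Matrix.unitaryGroup (Fin n) ℂ, M * matAbs X = X :=
  Matrix.exists_mem_unitaryGroup_mul_eq_of_conjTranspose_mul_self_eq
    (by rw [(matAbs_posSemidef X).isHermitian.eq, matAbs_mul_self])

/-- For positive semidefinite `A, B`, there is a unitary `V` with
`|BA| ≤ (A² + V B² V*)/2` in the Loewner order. -/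
theorem stmt3 {n : ℕ} (A B : Matrix (Fin n) (Fin n) ℂ)
    (hA : A.PosSemidef) (hB : B.PosSemidef) :
    ∃ V ∈ Matrix.unitaryGroup (Fin n) ℂ,
      ((1 / 2 : ℂ) • (A ^ 2 + V * B ^ 2 * star V) - matAbs (B * A)).PosSemidef := by
  obtain ⟨M, hM, hMX⟩ := exists_mem_unitaryGroup_mul_matAbs_eq (B * A)
  have habs_eq_left : matAbs (B * A) = star M * B * A := calc
    _ = star M * M * matAbs (B * A) := by rw [Unitary.star_mul_self_of_mem hM, one_mul]
    _ = star M * B * A := by rw [mul_assoc, hMX, mul_assoc]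
  have habs_eq_right : matAbs (B * A) = A * B * M := by
    rw [← (matAbs_posSemidef (B * A)).isHermitian.eq, habs_eq_left, ← Matrix.star_eq_conjTranspose]
    simp only [star_mul, star_star, hA.isHermitian.isSelfAdjoint.star_eq,
      hB.isHermitian.isSelfAdjoint.star_eq, mul_assoc]
  have key : (1 / 2 : ℂ) • (A ^ 2 + star M * B ^ 2 * M) - matAbs (B * A) =
      (1 / 2 : ℂ) • (star (A - B * M) * (A - B * M)) := by
    rw [star_sub_mul_mul_self_sub_mul hA.isHermitian.isSelfAdjoint hB.isHermitian.isSelfAdjoint,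
      ← habs_eq_left, ← habs_eq_right]
    module
  refine ⟨star M, Unitary.star_mem hM, ?_⟩
  rw [star_star, key]
  exact (Matrix.posSemidef_conjTranspose_mul_self _).smul (by norm_num [Complex.le_def])
end

section
/- For any unitarily invariant norm ‖·‖ on M_n(ℂ) and all X, Y ∈ M_n(ℂ), the Cauchy–Schwarz inequality ‖X*Y‖ ≤ ‖X*X‖^{1/2} ‖Y*Y‖^{1/2} holds. -/
/-!
Let `p` be a unitarily invariant seminorm. Then `p (h * x) ≤ p x` for a selfadjoint contraction
`h`, since `h` is the mean of the unitaries `h ± i √(1 - h²)`; through the polar decomposition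
`c = w |c|` the same holds for every invertible contraction `c`. Hence `p` is monotone on strictly
positive elements: if `a ≤ b` then `a = k b k*` with `k = a^{1/2} b^{-1/2}` an invertible
contraction.

For invertible `x`, `y` write `x* y = w |x* y|` and `z = x w`. Then `z* y = |x* y| = y* z`, so
`2 |x* y| ≤ z* z + y* y` because the difference is `(z - y)* (z - y)`, and monotonicity gives
`p (x* y) ≤ (p (x* x) + p (y* y)) / 2`. For matrices this extends to all `x`, `y` by adding small
multiples of the identity, and the substitution `x ↦ s x`, `y ↦ s⁻¹ y` turns the arithmetic mean
into the geometric mean.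
-/

open Matrix Filter Topology

theorem le_sqrt_mul_sqrt_of_forall_le_add_div_two {a b c : ℝ} (ha : 0 ≤ a) (hb : 0 ≤ b)
    (h : ∀ t > 0, c ≤ (t * a + t⁻¹ * b) / 2) : c ≤ √a * √b := by
  set α := √a
  set β := √b
  have hα : 0 ≤ α := Real.sqrt_nonneg a
  have hβ : 0 ≤ β := Real.sqrt_nonneg b
  have h_approx : ∀ ε > 0, c ≤ α * β + ε * (α + β) / 2 := by
    intro ε hε
    have hαε : 0 < α + ε := by linarith
    have hβε : 0 < β + ε := by linarith
    have hta : (β + ε) / (α + ε) * a ≤ α * (β + ε) := by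
      rw [← Real.sq_sqrt ha, div_mul_eq_mul_div, div_le_iff₀ hαε]
      nlinarith [mul_nonneg hα hβε.le, mul_nonneg (mul_nonneg hα hβε.le) hε.le]
    have htb : ((β + ε) / (α + ε))⁻¹ * b ≤ β * (α + ε) := by
      rw [inv_div, ← Real.sq_sqrt hb, div_mul_eq_mul_div, div_le_iff₀ hβε]
      nlinarith [mul_nonneg hβ hαε.le, mul_nonneg (mul_nonneg hβ hαε.le) hε.le]
    refine (h _ (div_pos hβε hαε)).trans ?_
    linarith
  refine le_of_forall_pos_le_add fun ε hε => ?_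
  have hs : 0 < α + β + 1 := by linarith
  have hε' : ε / (α + β + 1) * (α + β) ≤ ε := by
    rw [div_mul_eq_mul_div, div_le_iff₀ hs]
    nlinarith
  have := h_approx (ε / (α + β + 1)) (by positivity)
  nlinarith [mul_nonneg (div_pos hε hs).le (add_nonneg hα hβ)]

theorem Seminorm.continuous_of_finiteDimensional {𝕜 E : Type*} [NormedField 𝕜]
    [NormedAddCommGroup E] [NormedSpace ℝ E] [FiniteDimensional ℝ E] [SMul ℝ 𝕜]
    [NormSMulClass ℝ 𝕜] [Module 𝕜 E] [IsScalarTower ℝ 𝕜 E] (p : Seminorm 𝕜 E) :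
    Continuous p := by
  simpa [continuousOn_univ] using p.convexOn.continuousOn_interior

def Seminorm.IsUnitarilyInvariant {R : Type*} [Ring R] [StarRing R] [Module ℂ R]
    (p : Seminorm ℂ R) : Prop :=
  ∀ x, ∀ u ∈ unitary R, ∀ v ∈ unitary R, p (u * x * v) = p x

theorem Seminorm.map_star_mul_le_sqrt_mul_sqrt {R : Type*} [Ring R] [StarRing R] [Module ℂ R]
    [StarModule ℂ R] [IsScalarTower ℂ R R] [SMulCommClass ℂ R R] (p : Seminorm ℂ R)
    (h : ∀ x y : R, p (star x * y) ≤ (p (star x * x) + p (star y * y)) / 2) (x y : R) :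
    p (star x * y) ≤ √(p (star x * x)) * √(p (star y * y)) := by
  have h_ofReal_smul (r r' : ℝ) (x y : R) :
      p (star ((r : ℂ) • x) * ((r' : ℂ) • y)) = |r * r'| * p (star x * y) := by
    rw [star_smul, Complex.star_def, Complex.conj_ofReal, smul_mul_smul_comm, ← Complex.ofReal_mul,
      map_smul_eq_mul, Complex.norm_real, Real.norm_eq_abs]
  refine le_sqrt_mul_sqrt_of_forall_le_add_div_two (apply_nonneg p _) (apply_nonneg p _)
    fun t ht => ?_
  have hs : 0 < √t := Real.sqrt_pos.mpr ht
  have := h ((√t : ℂ) • x) ((((√t)⁻¹ : ℝ) : ℂ) • y)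
  rwa [h_ofReal_smul, h_ofReal_smul, h_ofReal_smul, mul_inv_cancel₀ hs.ne', abs_one, one_mul,
    Real.mul_self_sqrt ht.le, ← mul_inv, Real.mul_self_sqrt ht.le, abs_of_pos ht,
    abs_of_pos (inv_pos.mpr ht)] at this

section CStarAlgebra

variable {A : Type*} [CStarAlgebra A] [PartialOrder A] [StarOrderedRing A]

theorem IsSelfAdjoint.exists_mem_unitary_eq_two_inv_smul_add_star {h : A} (hh : IsSelfAdjoint h)
    (h_norm : ‖h‖ ≤ 1) : ∃ u ∈ unitary A, h = (2 : ℝ)⁻¹ • (u + star u) := by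
  refine ⟨_, (selfAdjoint.unitarySelfAddISMul ⟨h, hh⟩ h_norm).2, ?_⟩
  rw [← realPart_apply_coe]
  exact congrArg Subtype.val
    (selfAdjoint.realPart_unitarySelfAddISMul (⟨h, hh⟩ : selfAdjoint A) h_norm).symm

theorem IsUnit.exists_mem_unitary_eq_mul_cfcAbs {c : A} (hc : IsUnit c) :
    ∃ w ∈ unitary A, c = w * CFC.abs c := by
  obtain ⟨u, hu⟩ : IsUnit (CFC.abs c) := (CFC.isUnit_sqrt_iff _).mpr (hc.star.mul hc)
  have hu_star : star (↑u⁻¹ : A) = ↑u⁻¹ := by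
    have : star u = u :=
      Units.ext (by rw [Units.coe_star, hu, (CFC.abs_nonneg c).isSelfAdjoint.star_eq])
    rw [← Units.coe_star_inv, this]
  obtain ⟨w, hw⟩ : IsUnit (c * ↑u⁻¹) := hc.mul u⁻¹.isUnit
  have hleft : star (c * ↑u⁻¹) * (c * ↑u⁻¹) = 1 := by
    rw [star_mul, hu_star, mul_assoc, ← mul_assoc (star c), ← CFC.abs_mul_abs, ← hu,
      ← mul_assoc, ← mul_assoc, Units.inv_mul, one_mul, Units.mul_inv]
  refine ⟨c * ↑u⁻¹, Unitary.mem_iff.mpr ⟨hleft, ?_⟩,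
    by rw [mul_assoc, ← hu, Units.inv_mul, mul_one]⟩
  rw [← hw] at hleft ⊢
  rw [← Units.inv_eq_of_mul_eq_one_left hleft, Units.mul_inv]

end CStarAlgebra

theorem Matrix.eventually_isUnit_add_smul_one {m : Type*} [Fintype m] [DecidableEq m]
    (X : Matrix m m ℂ) :
    ∀ᶠ t in 𝓝[≠] (0 : ℂ), IsUnit (X + t • 1) := by
  have hfin : (Neg.neg ⁻¹' spectrum ℂ X : Set ℂ).Finite :=
    X.finite_spectrum.preimage neg_injective.injOn
  filter_upwards [nhdsNE_le_cofinite 0 hfin.compl_mem_cofinite] with t ht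
  have := (spectrum.notMem_iff.mp ht).neg
  rwa [Algebra.algebraMap_eq_smul_one, neg_sub, neg_smul, sub_neg_eq_add] at this

namespace Seminorm.IsUnitarilyInvariant

section Ring

variable {R : Type*} [Ring R] [StarRing R] [Module ℂ R] {p : Seminorm ℂ R}
  (hp : p.IsUnitarilyInvariant)
include hp

theorem map_unitary_mul {u : R} (hu : u ∈ unitary R) (x : R) : p (u * x) = p x := by
  simpa using hp x u hu 1 (one_mem _)

theorem map_mul_unitary {u : R} (hu : u ∈ unitary R) (x : R) : p (x * u) = p x := by
  simpa using hp x 1 (one_mem _) u hu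

end Ring

section CStarAlgebra

variable {A : Type*} [CStarAlgebra A] [PartialOrder A] [StarOrderedRing A] {p : Seminorm ℂ A}
  (hp : p.IsUnitarilyInvariant)
include hp

theorem map_mul_le_of_isSelfAdjoint {h : A} (hh : IsSelfAdjoint h) (h_norm : ‖h‖ ≤ 1) (x : A) :
    p (h * x) ≤ p x ∧ p (x * h) ≤ p x := by
  obtain ⟨u, hu, rfl⟩ := hh.exists_mem_unitary_eq_two_inv_smul_add_star h_norm
  have h_mean (y z : A) : p ((2 : ℝ)⁻¹ • (y + z)) ≤ 2⁻¹ * (p y + p z) := by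
    rw [← Complex.coe_smul, map_smul_eq_mul, Complex.norm_real, Real.norm_of_nonneg (by norm_num)]
    gcongr
    exact map_add_le_add p y z
  constructor
  · calc p ((2 : ℝ)⁻¹ • (u + star u) * x) ≤ 2⁻¹ * (p (u * x) + p (star u * x)) := by
          rw [smul_mul_assoc, add_mul]; exact h_mean _ _
      _ = p x := by
          rw [hp.map_unitary_mul hu, hp.map_unitary_mul (Unitary.star_mem hu)]; ring
  · calc p (x * ((2 : ℝ)⁻¹ • (u + star u))) ≤ 2⁻¹ * (p (x * u) + p (x * star u)) := by
          rw [mul_smul_comm, mul_add]; exact h_mean _ _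
      _ = p x := by
          rw [hp.map_mul_unitary hu, hp.map_mul_unitary (Unitary.star_mem hu)]; ring

theorem map_mul_le_of_isUnit {c : A} (hc : IsUnit c) (hc_norm : ‖c‖ ≤ 1) (x : A) :
    p (c * x) ≤ p x ∧ p (x * c) ≤ p x := by
  obtain ⟨w, hw, hcw⟩ := hc.exists_mem_unitary_eq_mul_cfcAbs
  have habs := hp.map_mul_le_of_isSelfAdjoint (CFC.abs_nonneg c).isSelfAdjoint
    (by rwa [CFC.norm_abs])
  constructor
  · rw [hcw, mul_assoc, hp.map_unitary_mul hw]
    exact (habs x).1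
  · rw [hcw, ← mul_assoc]
    exact (habs _).2.trans_eq (hp.map_mul_unitary hw x)

open CFC in
theorem map_le_map_of_le {a b : A} (ha : IsStrictlyPositive a) (hab : a ≤ b) : p a ≤ p b := by
  have hb : IsStrictlyPositive b := ha.of_le hab
  set k := sqrt a * b ^ (-(1 / 2) : ℝ) with hk
  have hk_norm : ‖k‖ ≤ 1 := (le_iff_norm_sqrt_mul_rpow a b ha.nonneg hb).mp hab
  have hk_unit : IsUnit k :=
    (IsStrictlyPositive.sqrt a ha).isUnit.mul (IsStrictlyPositive.rpow b _ hb).isUnit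
  have hkbk : k * b * star k = a := by
    rw [hk, star_mul, (sqrt_nonneg a).isSelfAdjoint.star_eq, rpow_nonneg.isSelfAdjoint.star_eq]
    calc sqrt a * b ^ (-(1 / 2) : ℝ) * b * (b ^ (-(1 / 2) : ℝ) * sqrt a)
        = sqrt a * (b ^ (-(1 / 2) : ℝ) * b * b ^ (-(1 / 2) : ℝ)) * sqrt a := by
          simp only [mul_assoc]
      _ = a := by rw [conjugate_rpow_neg_one_half b hb, mul_one, sqrt_mul_sqrt_self a ha.nonneg]
  calc p a = p (k * (b * star k)) := by rw [← mul_assoc, hkbk]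
    _ ≤ p (b * star k) := (hp.map_mul_le_of_isUnit hk_unit hk_norm _).1
    _ ≤ p b := (hp.map_mul_le_of_isUnit hk_unit.star (by rwa [norm_star]) _).2

theorem map_star_mul_le_add_div_two_of_isUnit {x y : A} (hx : IsUnit x) (hy : IsUnit y) :
    p (star x * y) ≤ (p (star x * x) + p (star y * y)) / 2 := by
  have hc : IsUnit (star x * y) := hx.star.mul hy
  obtain ⟨w, hw, hcw⟩ := hc.exists_mem_unitary_eq_mul_cfcAbs
  set z := x * w
  have hzy : star z * y = CFC.abs (star x * y) := by
    rw [star_mul, mul_assoc]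
    nth_rw 1 [hcw]
    rw [← mul_assoc, Unitary.star_mul_self_of_mem hw, one_mul]
  have hyz : star y * z = CFC.abs (star x * y) := by
    rw [← (CFC.abs_nonneg (star x * y)).isSelfAdjoint.star_eq, ← hzy, star_mul, star_star]
  have habs_pos : IsStrictlyPositive (CFC.abs (star x * y)) :=
    ((CFC.isUnit_sqrt_iff _ (star_mul_self_nonneg _)).mpr (hc.star.mul hc)).isStrictlyPositive
      (CFC.abs_nonneg _)
  have hle : (2 : ℂ) • CFC.abs (star x * y) ≤ star z * z + star y * y := by
    rw [← sub_nonneg]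
    convert star_mul_self_nonneg (z - y) using 1
    rw [two_smul, star_sub, sub_mul, mul_sub, mul_sub, hzy, hyz]
    abel
  have hzz : p (star z * z) = p (star x * x) := by
    rw [star_mul, mul_assoc, ← mul_assoc (star x), ← mul_assoc]
    exact hp _ _ (Unitary.star_mem hw) w hw
  calc p (star x * y) = p (CFC.abs (star x * y)) := by
        nth_rw 1 [hcw]; exact hp.map_unitary_mul hw _
    _ = p ((2 : ℂ) • CFC.abs (star x * y)) / 2 := by rw [map_smul_eq_mul]; norm_num
    _ ≤ p (star z * z + star y * y) / 2 := by
      gcongr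
      exact hp.map_le_map_of_le (by rw [two_smul]; exact habs_pos.add_nonneg habs_pos.nonneg) hle
    _ ≤ (p (star x * x) + p (star y * y)) / 2 := by
      gcongr
      exact (map_add_le_add p _ _).trans_eq (by rw [hzz])

end CStarAlgebra

open scoped Matrix.Norms.L2Operator MatrixOrder in
theorem map_star_mul_le_add_div_two {m : Type*} [Fintype m] [DecidableEq m]
    {p : Seminorm ℂ (Matrix m m ℂ)}
    (hp : p.IsUnitarilyInvariant) (X Y : Matrix m m ℂ) :
    p (star X * Y) ≤ (p (star X * X) + p (star Y * Y)) / 2 := by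
  have hlim (Z W : Matrix m m ℂ) : Tendsto (fun t : ℂ => p (star (Z + t • 1) * (W + t • 1)))
      (𝓝[≠] 0) (𝓝 (p (star Z * W))) := by
    have h : Continuous fun t : ℂ => p (star (Z + t • 1) * (W + t • 1)) :=
      p.continuous_of_finiteDimensional.comp (by fun_prop)
    simpa using (h.tendsto 0).mono_left nhdsWithin_le_nhds
  refine le_of_tendsto_of_tendsto (hlim X Y) (((hlim X X).add (hlim Y Y)).div_const 2) ?_
  filter_upwards [X.eventually_isUnit_add_smul_one, Y.eventually_isUnit_add_smul_one]
    with t hX hY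
  exact hp.map_star_mul_le_add_div_two_of_isUnit hX hY

end Seminorm.IsUnitarilyInvariant

theorem stmt9_general {n : ℕ} (N : Matrix (Fin n) (Fin n) ℂ → ℝ)
    (htri : ∀ X Y, N (X + Y) ≤ N X + N Y)
    (hsmul : ∀ (c : ℂ) X, N (c • X) = ‖c‖ * N X)
    (hinv : ∀ X, ∀ U ∈ Matrix.unitaryGroup (Fin n) ℂ, ∀ V ∈ Matrix.unitaryGroup (Fin n) ℂ,
      N (U * X * V) = N X)
    (X Y : Matrix (Fin n) (Fin n) ℂ) :
    N (Xᴴ * Y) ≤ Real.sqrt (N (Xᴴ * X)) * Real.sqrt (N (Yᴴ * Y)) := by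
  let p : Seminorm ℂ (Matrix (Fin n) (Fin n) ℂ) := Seminorm.of N htri hsmul
  have hp : p.IsUnitarilyInvariant := hinv
  exact p.map_star_mul_le_sqrt_mul_sqrt hp.map_star_mul_le_add_div_two X Y

/-- Cauchy–Schwarz inequality for unitarily invariant norms:
`‖X*Y‖ ≤ ‖X*X‖^{1/2} ‖Y*Y‖^{1/2}`. -/
theorem stmt9 {n : ℕ} (N : Matrix (Fin n) (Fin n) ℂ → ℝ)
    (htri : ∀ X Y, N (X + Y) ≤ N X + N Y)
    (hsmul : ∀ (c : ℂ) X, N (c • X) = ‖c‖ * N X)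
    (hdef : ∀ X, N X = 0 ↔ X = 0)
    (hinv : ∀ X, ∀ U ∈ Matrix.unitaryGroup (Fin n) ℂ, ∀ V ∈ Matrix.unitaryGroup (Fin n) ℂ,
      N (U * X * V) = N X)
    (X Y : Matrix (Fin n) (Fin n) ℂ) :
    N (Xᴴ * Y) ≤ Real.sqrt (N (Xᴴ * X)) * Real.sqrt (N (Yᴴ * Y)) :=
  stmt9_general N htri hsmul hinv X Y
end

section
/- If ‖·‖ is a unitarily invariant norm on M_n(ℂ), then X ↦ ‖X*X‖^{1/2} is also a norm on M_n(ℂ), and it is unitarily invariant. -/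
/-!
A unitarily invariant norm `N` is monotone on positive elements: if `0 ≤ a ≤ b` (after
perturbing both to be invertible) then `a = c b c⋆` with `c⋆c ≤ 1`; writing `c = w |c|` with `w`
unitary, and `|c| = (u + u⋆) / 2` with `u = |c| + i √(1 - |c|²)` unitary, gives
`N a = N (|c| b |c|) ≤ N b`. The triangle inequality for `x ↦ √(N (x⋆x))` then follows from the
operator inequality `(x + y)⋆(x + y) ≤ (1 + t) x⋆x + (1 + t⁻¹) y⋆y`, optimised over `t > 0`.
-/

lemma le_of_forall_pos_le_of_continuousAt {f : ℝ → ℝ} {z : ℝ} (hf : ContinuousAt f 0)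
    (h : ∀ ε > 0, z ≤ f ε) : z ≤ f 0 :=
  ge_of_tendsto (hf.tendsto.mono_left nhdsWithin_le_nhds)
    (eventually_nhdsWithin_of_forall (s := Set.Ioi 0) h)

lemma le_add_sq_of_forall_pos {a b z : ℝ} (ha : 0 ≤ a) (hb : 0 ≤ b)
    (h : ∀ t > 0, z ≤ (1 + t) * a ^ 2 + (1 + t⁻¹) * b ^ 2) : z ≤ (a + b) ^ 2 := by
  have h_perturbed : ∀ ε > 0, z ≤ (a + b + 2 * ε) ^ 2 := by
    intro ε hε
    -- the optimal `t = b / a`, perturbed so that `a = 0` needs no separate case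
    set t := (b + ε) / (a + ε)
    have ht : 0 < t := by positivity
    calc z ≤ (1 + t) * a ^ 2 + (1 + t⁻¹) * b ^ 2 := h t ht
      _ ≤ (1 + t) * (a + ε) ^ 2 + (1 + t⁻¹) * (b + ε) ^ 2 := by gcongr <;> linarith
      _ = (a + b + 2 * ε) ^ 2 := by simp only [t]; field_simp; ring
  simpa using le_of_forall_pos_le_of_continuousAt (f := fun ε ↦ (a + b + 2 * ε) ^ 2)
    (by fun_prop) h_perturbed

namespace Seminorm

lemma map_real_smul {E : Type*} [AddCommGroup E] [Module ℂ E] (p : Seminorm ℂ E) (r : ℝ)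
    (x : E) : p (r • x) = |r| * p x := by
  rw [← Complex.coe_smul, map_smul_eq_mul, Complex.norm_real, Real.norm_eq_abs]

section Ring

variable {A : Type*} [Ring A] [StarMul A] [Module ℂ A]

def IsUnitarilyInvariant_s10 (p : Seminorm ℂ A) : Prop :=
  ∀ x, ∀ u ∈ unitary A, ∀ v ∈ unitary A, p (u * x * v) = p x

variable {p : Seminorm ℂ A}

lemma IsUnitarilyInvariant_s10.map_unitary_mul (hp : p.IsUnitarilyInvariant_s10) (x : A) {u : A}
    (hu : u ∈ unitary A) : p (u * x) = p x := by
  simpa using hp x u hu 1 (one_mem _)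

lemma IsUnitarilyInvariant_s10.map_mul_unitary (hp : p.IsUnitarilyInvariant_s10) (x : A) {u : A}
    (hu : u ∈ unitary A) : p (x * u) = p x := by
  simpa using hp x 1 (one_mem _) u hu

end Ring

section CStarAlgebra

variable {A : Type*} [CStarAlgebra A] {p : Seminorm ℂ A}

lemma sqrt_map_star_smul_mul_smul (c : ℂ) (x : A) :
    √(p (star (c • x) * (c • x))) = ‖c‖ * √(p (star x * x)) := by
  have h : star (c • x) * (c • x) = (‖c‖ ^ 2 : ℝ) • (star x * x) := by
    rw [star_smul, smul_mul_smul_comm, ← Complex.coe_smul, RCLike.star_def, RCLike.conj_mul]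
    norm_cast
  rw [h, map_real_smul, abs_of_nonneg (by positivity), Real.sqrt_mul (by positivity),
    Real.sqrt_sq (norm_nonneg c)]

variable [PartialOrder A] [StarOrderedRing A]

lemma _root_.IsSelfAdjoint.exists_unitary_eq_half_add_star {a : A} (ha : IsSelfAdjoint a)
    (ha_norm : ‖a‖ ≤ 1) : ∃ u ∈ unitary A, a = (2⁻¹ : ℂ) • (u + star u) := by
  let u := selfAdjoint.unitarySelfAddISMul ⟨a, ha⟩ ha_norm
  refine ⟨u, u.2, ?_⟩
  have := congrArg Subtype.val (selfAdjoint.realPart_unitarySelfAddISMul ⟨a, ha⟩ ha_norm)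
  rw [realPart_apply_coe, ← Complex.coe_smul] at this
  simpa using this.symm

lemma IsUnitarilyInvariant_s10.map_selfAdjoint_mul_le (hp : p.IsUnitarilyInvariant_s10) {a : A}
    (ha : IsSelfAdjoint a) (ha_norm : ‖a‖ ≤ 1) (x : A) : p (a * x) ≤ p x := by
  obtain ⟨u, hu, rfl⟩ := ha.exists_unitary_eq_half_add_star ha_norm
  calc p ((2⁻¹ : ℂ) • (u + star u) * x) = 2⁻¹ * p (u * x + star u * x) := by
        rw [smul_mul_assoc, map_smul_eq_mul, add_mul]; norm_num
    _ ≤ 2⁻¹ * (p (u * x) + p (star u * x)) := by gcongr; exact map_add_le_add p _ _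
    _ = p x := by
        rw [hp.map_unitary_mul x hu, hp.map_unitary_mul x (Unitary.star_mem hu)]; ring

lemma IsUnitarilyInvariant_s10.map_mul_selfAdjoint_le (hp : p.IsUnitarilyInvariant_s10) {a : A}
    (ha : IsSelfAdjoint a) (ha_norm : ‖a‖ ≤ 1) (x : A) : p (x * a) ≤ p x := by
  obtain ⟨u, hu, rfl⟩ := ha.exists_unitary_eq_half_add_star ha_norm
  calc p (x * (2⁻¹ : ℂ) • (u + star u)) = 2⁻¹ * p (x * u + x * star u) := by
        rw [mul_smul_comm, map_smul_eq_mul, mul_add]; norm_num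
    _ ≤ 2⁻¹ * (p (x * u) + p (x * star u)) := by gcongr; exact map_add_le_add p _ _
    _ = p x := by
        rw [hp.map_mul_unitary x hu, hp.map_mul_unitary x (Unitary.star_mem hu)]; ring

lemma IsUnitarilyInvariant_s10.map_mul_mul_star_le (hp : p.IsUnitarilyInvariant_s10) {c : A}
    (hc : IsUnit c) (hc_le : star c * c ≤ 1) (x : A) : p (c * x * star c) ≤ p x := by
  set s := CFC.sqrt (star c * c)
  have hs_sa : IsSelfAdjoint s := (CFC.sqrt_nonneg _).isSelfAdjoint
  have hs_unit : IsUnit s := (CFC.isUnit_sqrt_iff _).mpr (hc.star.mul hc)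
  have hs_norm : ‖s‖ ≤ 1 := by
    rw [CStarAlgebra.norm_le_one_iff_of_nonneg s (CFC.sqrt_nonneg _), ← CFC.sqrt_one]
    exact CFC.sqrt_le_sqrt _ _ hc_le
  -- polar decomposition `c = w * s`
  set r := CFC.sqrt (Ring.inverse (star c * c))
  have hr : r = Ring.inverse s := CFC.sqrt_ringInverse
  have hr_sa : IsSelfAdjoint r := (CFC.sqrt_nonneg _).isSelfAdjoint
  set w := c * r
  have hw : w ∈ unitary A := by
    refine (hc.mul (hr ▸ hs_unit.ringInverse)).mem_unitary_of_star_mul_self ?_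
    calc star (c * r) * (c * r) = r * (s * s) * r := by
          rw [star_mul, hr_sa.star_eq, CFC.sqrt_mul_sqrt_self (star c * c)]; noncomm_ring
      _ = 1 := by
          rw [hr, ← mul_assoc, Ring.inverse_mul_cancel s hs_unit, one_mul,
            Ring.mul_inverse_cancel s hs_unit]
  have hcw : c = w * s := by rw [mul_assoc, hr, Ring.inverse_mul_cancel s hs_unit, mul_one]
  calc p (c * x * star c) = p (w * (s * x * s) * star w) := by
        rw [hcw, star_mul, hs_sa.star_eq]; noncomm_ring
    _ = p (s * (x * s)) := by rw [hp _ w hw _ (Unitary.star_mem hw), mul_assoc]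
    _ ≤ p (x * s) := hp.map_selfAdjoint_mul_le hs_sa hs_norm _
    _ ≤ p x := hp.map_mul_selfAdjoint_le hs_sa hs_norm _

lemma IsUnitarilyInvariant_s10.map_le_map_of_isStrictlyPositive (hp : p.IsUnitarilyInvariant_s10)
    {a b : A} (ha : IsStrictlyPositive a) (hb : IsStrictlyPositive b) (hab : a ≤ b) :
    p a ≤ p b := by
  set r := CFC.sqrt (Ring.inverse b)
  have hr_sa : IsSelfAdjoint r := (CFC.sqrt_nonneg _).isSelfAdjoint
  have hrbr : r * b * r = 1 := CFC.conjSqrt_ringInverse_self b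
  set c := CFC.sqrt a * r
  have hc : IsUnit c := ha.sqrt.isUnit.mul (hb.ringInverse.sqrt).isUnit
  have hc_le : star c * c ≤ 1 := by
    calc star c * c = r * a * r := by
          rw [star_mul, hr_sa.star_eq, (CFC.sqrt_nonneg a).isSelfAdjoint.star_eq,
            show r * CFC.sqrt a * (CFC.sqrt a * r) = r * (CFC.sqrt a * CFC.sqrt a) * r by
              noncomm_ring, CFC.sqrt_mul_sqrt_self a]
      _ ≤ r * b * r := hr_sa.conjugate_le_conjugate hab
      _ = 1 := hrbr
  have hcbc : c * b * star c = a := by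
    rw [star_mul, hr_sa.star_eq, (CFC.sqrt_nonneg a).isSelfAdjoint.star_eq,
      show CFC.sqrt a * r * b * (r * CFC.sqrt a) = CFC.sqrt a * (r * b * r) * CFC.sqrt a by
        noncomm_ring, hrbr, mul_one, CFC.sqrt_mul_sqrt_self a]
  simpa only [hcbc] using hp.map_mul_mul_star_le hc hc_le b

lemma IsUnitarilyInvariant_s10.map_le_map_of_nonneg (hp : p.IsUnitarilyInvariant_s10) {a b : A}
    (ha : 0 ≤ a) (hab : a ≤ b) : p a ≤ p b := by
  have h_perturbed : ∀ ε > 0, p a ≤ p b + 2 * ε * p 1 := by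
    intro ε hε
    have hε1 : IsStrictlyPositive (ε • (1 : A)) := isStrictlyPositive_one.smul hε
    have hpε : p (ε • (1 : A)) = ε * p 1 := by rw [map_real_smul, abs_of_pos hε]
    have hmono : p (a + ε • 1) ≤ p (b + ε • 1) :=
      hp.map_le_map_of_isStrictlyPositive (hε1.nonneg_add ha)
        (hε1.nonneg_add (ha.trans hab)) (add_le_add_left hab _)
    calc p a = p (a + ε • 1 - ε • 1) := by rw [add_sub_cancel_right]
      _ ≤ p (a + ε • 1) + p (ε • 1) := map_sub_le_add p _ _
      _ ≤ p b + p (ε • 1) + p (ε • 1) := by gcongr; exact hmono.trans (map_add_le_add p _ _)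
      _ = p b + 2 * ε * p 1 := by rw [hpε]; ring
  simpa using le_of_forall_pos_le_of_continuousAt (f := fun ε ↦ p b + 2 * ε * p 1)
    (by fun_prop) h_perturbed

lemma _root_.star_add_mul_add_le (x y : A) {t : ℝ} (ht : 0 < t) :
    star (x + y) * (x + y) ≤ (1 + t) • (star x * x) + (1 + t⁻¹) • (star y * y) := by
  have h : (1 + t) • (star x * x) + (1 + t⁻¹) • (star y * y) - star (x + y) * (x + y) =
      t⁻¹ • (star (t • x - y) * (t • x - y)) := by
    simp only [star_add, star_sub, star_smul, star_trivial, add_mul, mul_add, sub_mul, mul_sub,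
      smul_mul_assoc, mul_smul_comm]
    match_scalars <;> field_simp <;> ring
  exact sub_nonneg.mp (h ▸ smul_nonneg (inv_nonneg.mpr ht.le) (star_mul_self_nonneg _))

lemma IsUnitarilyInvariant_s10.sqrt_map_star_add_mul_add_le (hp : p.IsUnitarilyInvariant_s10)
    (x y : A) :
    √(p (star (x + y) * (x + y))) ≤ √(p (star x * x)) + √(p (star y * y)) := by
  refine Real.sqrt_le_iff.mpr ⟨by positivity, le_add_sq_of_forall_pos (by positivity)
    (by positivity) fun t ht ↦ ?_⟩
  rw [Real.sq_sqrt (apply_nonneg p _), Real.sq_sqrt (apply_nonneg p _)]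
  calc p (star (x + y) * (x + y))
      ≤ p ((1 + t) • (star x * x) + (1 + t⁻¹) • (star y * y)) :=
        hp.map_le_map_of_nonneg (star_mul_self_nonneg _) (star_add_mul_add_le x y ht)
    _ ≤ p ((1 + t) • (star x * x)) + p ((1 + t⁻¹) • (star y * y)) := map_add_le_add p _ _
    _ = (1 + t) * p (star x * x) + (1 + t⁻¹) * p (star y * y) := by
        rw [map_real_smul, map_real_smul, abs_of_pos (by positivity), abs_of_pos (by positivity)]

noncomputable def IsUnitarilyInvariant_s10.sqrtStarMulSelf (hp : p.IsUnitarilyInvariant_s10) :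
    Seminorm ℂ A :=
  Seminorm.of (fun x ↦ √(p (star x * x))) hp.sqrt_map_star_add_mul_add_le
    sqrt_map_star_smul_mul_smul

lemma IsUnitarilyInvariant_s10.sqrtStarMulSelf_apply (hp : p.IsUnitarilyInvariant_s10) (x : A) :
    hp.sqrtStarMulSelf x = √(p (star x * x)) := rfl

lemma IsUnitarilyInvariant_s10.sqrtStarMulSelf_isUnitarilyInvariant (hp : p.IsUnitarilyInvariant_s10) :
    hp.sqrtStarMulSelf.IsUnitarilyInvariant_s10 := by
  intro x u hu v hv
  have h : star (u * x * v) * (u * x * v) = star v * (star x * x) * v := by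
    rw [star_mul, star_mul, show star v * (star x * star u) * (u * x * v) =
      star v * (star x * (star u * u) * x) * v by noncomm_ring, Unitary.star_mul_self_of_mem hu,
      mul_one]
  rw [sqrtStarMulSelf_apply, sqrtStarMulSelf_apply, h, hp _ _ (Unitary.star_mem hv) _ hv]

lemma IsUnitarilyInvariant_s10.sqrtStarMulSelf_eq_zero_iff (hp : p.IsUnitarilyInvariant_s10)
    (hp_def : ∀ x, p x = 0 → x = 0) {x : A} : hp.sqrtStarMulSelf x = 0 ↔ x = 0 := by
  rw [sqrtStarMulSelf_apply, Real.sqrt_eq_zero (apply_nonneg p _)]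
  refine ⟨fun h ↦ CStarRing.star_mul_self_eq_zero_iff x |>.mp (hp_def _ h), ?_⟩
  rintro rfl
  simp

end CStarAlgebra

end Seminorm

open Matrix
open scoped ComplexOrder

/-- If `N` is a unitarily invariant norm on `Mₙ(ℂ)`, then `X ↦ N(X*X)^{1/2}` is
also a norm on `Mₙ(ℂ)`, and it is unitarily invariant. -/
theorem stmt10 {n : ℕ} (N : Matrix (Fin n) (Fin n) ℂ → ℝ)
    (htri : ∀ X Y, N (X + Y) ≤ N X + N Y)
    (hsmul : ∀ (c : ℂ) X, N (c • X) = ‖c‖ * N X)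
    (hdef : ∀ X, N X = 0 ↔ X = 0)
    (hinv : ∀ X, ∀ U ∈ Matrix.unitaryGroup (Fin n) ℂ, ∀ V ∈ Matrix.unitaryGroup (Fin n) ℂ,
      N (U * X * V) = N X) :
    (∀ X Y : Matrix (Fin n) (Fin n) ℂ,
      Real.sqrt (N ((X + Y)ᴴ * (X + Y))) ≤ Real.sqrt (N (Xᴴ * X)) + Real.sqrt (N (Yᴴ * Y))) ∧
    (∀ (c : ℂ) (X : Matrix (Fin n) (Fin n) ℂ),
      Real.sqrt (N ((c • X)ᴴ * (c • X))) = ‖c‖ * Real.sqrt (N (Xᴴ * X))) ∧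
    (∀ X : Matrix (Fin n) (Fin n) ℂ, Real.sqrt (N (Xᴴ * X)) = 0 ↔ X = 0) ∧
    (∀ X : Matrix (Fin n) (Fin n) ℂ,
      ∀ U ∈ Matrix.unitaryGroup (Fin n) ℂ, ∀ V ∈ Matrix.unitaryGroup (Fin n) ℂ,
        Real.sqrt (N ((U * X * V)ᴴ * (U * X * V))) = Real.sqrt (N (Xᴴ * X))) := by
  open scoped Matrix.Norms.L2Operator MatrixOrder in
  let p : Seminorm ℂ (Matrix (Fin n) (Fin n) ℂ) := Seminorm.of N htri hsmul
  have hp : p.IsUnitarilyInvariant_s10 := hinv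
  let q := hp.sqrtStarMulSelf
  exact ⟨map_add_le_add q, map_smul_eq_mul q,
    fun X ↦ hp.sqrtStarMulSelf_eq_zero_iff (fun X ↦ (hdef X).mp),
    hp.sqrtStarMulSelf_isUnitarilyInvariant⟩
end

section
/- For positive definite matrices A, B ∈ M_n(ℂ), the Fuglede–Kadison-type determinant satisfies det(A+B)^{1/n} ≥ det(A)^{1/n} + det(B)^{1/n}; more generally, for any strictly increasing convex ψ : [0,∞) → [0,∞) with ψ(0) = 0, (det ψ(A+B))^{1/n} ≥ (det ψ(A))^{1/n} + (det ψ(B))^{1/n}. -/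
/-!
With `S = A^{1/2}` and `M = S⁻¹ B S⁻¹` one has `det (A + B) = det A · ∏ (1 + μᵢ)` and
`det B = det A · ∏ μᵢ` over the eigenvalues `μᵢ` of `M`, so Minkowski's inequality reduces to
the superadditivity of the geometric mean, which is AM-GM applied to the ratios `aᵢ / (aᵢ + bᵢ)`
and `bᵢ / (aᵢ + bᵢ)`.

For general `ψ` write `ψ x = x · g x`, where `g x = ψ x / x` is nondecreasing because `ψ` is
convex with `ψ 0 = 0`. As `A, B ≤ A + B`, Weyl's monotonicity theorem (a dimension count, turned
into a matching by Hall's theorem) pairs the eigenvalues of `A`, and those of `B`, with larger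
eigenvalues of `A + B`. Hence `det ψ(A) ≤ det A · G` and `det ψ(B) ≤ det B · G`, where `G` is
the product of `g` over the eigenvalues of `A + B`, while `det ψ(A + B) = det (A + B) · G`;
taking `n`-th roots and using the first part finishes the proof.
-/

open Matrix Finset
open scoped ComplexOrder InnerProductSpace MatrixOrder

section Scalar

variable {ι : Type*} [Fintype ι]

theorem Real.geom_mean_add_geom_mean_le_geom_mean_add [Nonempty ι] {a b : ι → ℝ}
    (ha : ∀ i, 0 < a i) (hb : ∀ i, 0 < b i) :
    (∏ i, a i) ^ (1 / (Fintype.card ι : ℝ)) + (∏ i, b i) ^ (1 / (Fintype.card ι : ℝ)) ≤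
      (∏ i, (a i + b i)) ^ (1 / (Fintype.card ι : ℝ)) := by
  set p : ℝ := 1 / (Fintype.card ι : ℝ)
  have hab : ∀ i, 0 < a i + b i := fun i => add_pos (ha i) (hb i)
  have hp : ∑ _i : ι, p = 1 := by simp [p]
  have key : ∀ u : ι → ℝ, (∀ i, 0 ≤ u i) →
      (∏ i, u i) ^ p ≤ (∏ i, (a i + b i)) ^ p * ∑ i, p * (u i / (a i + b i)) := by
    intro u hu
    have hratio : ∀ i ∈ univ, 0 ≤ u i / (a i + b i) := fun i _ => div_nonneg (hu i) (hab i).le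
    calc (∏ i, u i) ^ p = ((∏ i, (a i + b i)) * ∏ i, u i / (a i + b i)) ^ p := by
          rw [← prod_mul_distrib]
          exact congrArg (· ^ p) (prod_congr rfl fun i _ => by field_simp [(hab i).ne'])
      _ = (∏ i, (a i + b i)) ^ p * ∏ i, (u i / (a i + b i)) ^ p := by
          rw [Real.mul_rpow (prod_nonneg fun i _ => (hab i).le) (prod_nonneg hratio),
            Real.finsetProd_rpow _ _ hratio]
      _ ≤ (∏ i, (a i + b i)) ^ p * ∑ i, p * (u i / (a i + b i)) :=
          mul_le_mul_of_nonneg_left (Real.geom_mean_le_arith_mean_weighted _ _ _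
            (fun i _ => by positivity) hp hratio)
            (Real.rpow_nonneg (prod_nonneg fun i _ => (hab i).le) _)
  calc _ ≤ (∏ i, (a i + b i)) ^ p * ∑ i, p * (a i / (a i + b i)) +
        (∏ i, (a i + b i)) ^ p * ∑ i, p * (b i / (a i + b i)) :=
        add_le_add (key a fun i => (ha i).le) (key b fun i => (hb i).le)
    _ = (∏ i, (a i + b i)) ^ p * ∑ _i : ι, p := by
        rw [← mul_add, ← sum_add_distrib]
        exact congrArg _ (sum_congr rfl fun i _ => by field_simp [(hab i).ne'])
    _ = _ := by rw [hp, mul_one]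

namespace ConvexOn

variable {ψ : ℝ → ℝ} (hψconv : ConvexOn ℝ (Set.Ici 0) ψ)
  (hψnonneg : ∀ x ∈ Set.Ici (0 : ℝ), 0 ≤ ψ x) (hψ0 : ψ 0 = 0)
include hψconv hψnonneg hψ0

theorem prod_le_prod_mul_prod_div_of_le_perm {a c : ι → ℝ} (ha : ∀ i, 0 < a i)
    {σ : Equiv.Perm ι} (hac : ∀ i, a i ≤ c (σ i)) :
    ∏ i, ψ (a i) ≤ (∏ i, a i) * ∏ i, ψ (c i) / c i := by
  have slope_le : ∀ i, ψ (a i) / a i ≤ ψ (c (σ i)) / c (σ i) := fun i => by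
    simpa [hψ0] using hψconv.secant_mono (a := 0) Set.self_mem_Ici (ha i).le
      ((ha i).le.trans (hac i)) (ha i).ne' ((ha i).trans_le (hac i)).ne' (hac i)
  calc ∏ i, ψ (a i) = ∏ i, a i * (ψ (a i) / a i) :=
        prod_congr rfl fun i _ => by field_simp [(ha i).ne']
    _ ≤ ∏ i, a i * (ψ (c (σ i)) / c (σ i)) := by
        refine prod_le_prod (fun i _ => ?_) fun i _ =>
          mul_le_mul_of_nonneg_left (slope_le i) (ha i).le
        exact mul_nonneg (ha i).le (div_nonneg (hψnonneg _ (ha i).le) (ha i).le)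
    _ = (∏ i, a i) * ∏ i, ψ (c i) / c i := by
        rw [prod_mul_distrib, Equiv.prod_comp σ fun j => ψ (c j) / c j]

theorem prod_rpow_add_le_of_le_perm {a b c : ι → ℝ} (ha : ∀ i, 0 < a i)
    (hb : ∀ i, 0 < b i) {σ τ : Equiv.Perm ι} (hac : ∀ i, a i ≤ c (σ i))
    (hbc : ∀ i, b i ≤ c (τ i)) {p : ℝ} (hp : 0 ≤ p)
    (h : (∏ i, a i) ^ p + (∏ i, b i) ^ p ≤ (∏ i, c i) ^ p) :
    (∏ i, ψ (a i)) ^ p + (∏ i, ψ (b i)) ^ p ≤ (∏ i, ψ (c i)) ^ p := by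
  have hc : ∀ i, 0 < c i := fun i => by
    simpa using (ha (σ.symm i)).trans_le (hac (σ.symm i))
  set G := ∏ i, ψ (c i) / c i
  have hG : 0 ≤ G := prod_nonneg fun i _ => div_nonneg (hψnonneg _ (hc i).le) (hc i).le
  have hψprod : ∀ d : ι → ℝ, (∀ i, 0 < d i) → 0 ≤ ∏ i, ψ (d i) :=
    fun d hd => prod_nonneg fun i _ => hψnonneg _ (hd i).le
  have hψc : ∏ i, ψ (c i) = (∏ i, c i) * G := by
    rw [← prod_mul_distrib]
    exact prod_congr rfl fun i _ => by field_simp [(hc i).ne']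
  have hprod : ∀ d : ι → ℝ, (∀ i, 0 < d i) → 0 ≤ ∏ i, d i :=
    fun d hd => prod_nonneg fun i _ => (hd i).le
  calc (∏ i, ψ (a i)) ^ p + (∏ i, ψ (b i)) ^ p
      ≤ ((∏ i, a i) * G) ^ p + ((∏ i, b i) * G) ^ p := by
        gcongr
        · exact hψprod a ha
        · exact hψconv.prod_le_prod_mul_prod_div_of_le_perm hψnonneg hψ0 ha hac
        · exact hψprod b hb
        · exact hψconv.prod_le_prod_mul_prod_div_of_le_perm hψnonneg hψ0 hb hbc
    _ = ((∏ i, a i) ^ p + (∏ i, b i) ^ p) * G ^ p := by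
        rw [Real.mul_rpow (hprod a ha) hG, Real.mul_rpow (hprod b hb) hG, add_mul]
    _ ≤ (∏ i, c i) ^ p * G ^ p := by gcongr
    _ = (∏ i, ψ (c i)) ^ p := by rw [hψc, Real.mul_rpow (hprod c hc) hG]

end ConvexOn

end Scalar

theorem Fintype.exists_perm_le_comp_of_card_le {ι α : Type*} [Fintype ι] [DecidableEq ι]
    [LinearOrder α] {a c : ι → α} (h : ∀ t, #{i | t ≤ a i} ≤ #{i | t ≤ c i}) :
    ∃ σ : Equiv.Perm ι, ∀ i, a i ≤ c (σ i) := by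
  obtain ⟨f, hf, hfc⟩ := (all_card_le_biUnion_card_iff_exists_injective
    fun i => ({j | a i ≤ c j} : Finset ι)).mp fun s => by
      rcases s.eq_empty_or_nonempty with rfl | hs
      · simp
      obtain ⟨i₀, hi₀, hmin⟩ := s.exists_min_image a hs
      calc #s ≤ #{i | a i₀ ≤ a i} := card_le_card fun i hi => by simpa using hmin i hi
        _ ≤ #{j | a i₀ ≤ c j} := h (a i₀)
        _ ≤ #(s.biUnion fun i => {j | a i ≤ c j}) :=
          card_le_card fun j hj => mem_biUnion.mpr ⟨i₀, hi₀, hj⟩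
  exact ⟨Equiv.ofBijective f (Finite.injective_iff_bijective.mp hf), fun i => by
    simpa using hfc i⟩

section Orthonormal

variable {𝕜 : Type*} [RCLike 𝕜] {E : Type*} [NormedAddCommGroup E] [InnerProductSpace 𝕜 E]
  {ι : Type*} [Fintype ι] {v : ι → E}

theorem Orthonormal.re_inner_map_sum_smul (hv : Orthonormal 𝕜 v) {T : E →ₗ[𝕜] E} {μ : ι → ℝ}
    (hT : ∀ i, T (v i) = (μ i : 𝕜) • v i) (c : ι → 𝕜) :
    RCLike.re ⟪T (∑ i, c i • v i), ∑ i, c i • v i⟫_𝕜 = ∑ i, μ i * ‖c i‖ ^ 2 := by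
  have hTsum : T (∑ i, c i • v i) = ∑ i, ((μ i : 𝕜) * c i) • v i := by
    simp only [map_sum, map_smul, hT, smul_smul, mul_comm]
  rw [hTsum, hv.inner_sum, map_sum]
  refine Finset.sum_congr rfl fun i _ => ?_
  rw [map_mul (starRingEnd 𝕜), RCLike.conj_ofReal, mul_assoc, RCLike.conj_mul,
    ← RCLike.ofReal_pow, ← RCLike.ofReal_mul, RCLike.ofReal_re]

theorem Orthonormal.norm_sum_smul_sq (hv : Orthonormal 𝕜 v) (c : ι → 𝕜) :
    ‖∑ i, c i • v i‖ ^ 2 = ∑ i, ‖c i‖ ^ 2 := by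
  have h := hv.re_inner_map_sum_smul (T := LinearMap.id) (μ := fun _ => 1) (fun i => by simp) c
  simpa only [LinearMap.id_apply, inner_self_eq_norm_sq, one_mul] using h

end Orthonormal

namespace Matrix

variable {𝕜 : Type*} [RCLike 𝕜] {n : Type*} [Fintype n] [DecidableEq n]

namespace IsHermitian

theorem toEuclideanLin_eigenvectorBasis {A : Matrix n n 𝕜} (hA : A.IsHermitian) (i : n) :
    toEuclideanLin A (hA.eigenvectorBasis i) = (hA.eigenvalues i : 𝕜) • hA.eigenvectorBasis i := by
  rw [toLpLin_apply, hA.mulVec_eigenvectorBasis, WithLp.toLp_smul, WithLp.toLp_ofLp,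
    RCLike.real_smul_eq_coe_smul (K := 𝕜)]

theorem card_filter_le_eigenvalues_le_of_posSemidef_sub {A C : Matrix n n 𝕜} (hA : A.IsHermitian)
    (hC : C.IsHermitian) (hAC : (C - A).PosSemidef) (t : ℝ) :
    #{i | t ≤ hA.eigenvalues i} ≤ #{i | t ≤ hC.eigenvalues i} := by
  by_contra! hlt
  set s : Finset n := {i | t ≤ hA.eigenvalues i}
  set s' : Finset n := {i | hC.eigenvalues i < t}
  let u : s → EuclideanSpace 𝕜 n := fun i => hA.eigenvectorBasis i
  let w : s' → EuclideanSpace 𝕜 n := fun i => hC.eigenvectorBasis i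
  have hu : Orthonormal 𝕜 u := hA.eigenvectorBasis.orthonormal.comp _ Subtype.val_injective
  have hw : Orthonormal 𝕜 w := hC.eigenvectorBasis.orthonormal.comp _ Subtype.val_injective
  have hcard : #{i | t ≤ hC.eigenvalues i} + #s' = Fintype.card n := by
    simpa only [s', not_le, card_univ] using
      card_filter_add_card_filter_not (s := (univ : Finset n)) (t ≤ hC.eigenvalues ·)
  obtain ⟨x, hxu, hxw, hx0⟩ :
      ∃ x ∈ Submodule.span 𝕜 (Set.range u), x ∈ Submodule.span 𝕜 (Set.range w) ∧ x ≠ 0 := by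
    have hdisj := mt (Submodule.finrank_add_finrank_le_of_disjoint
      (s := Submodule.span 𝕜 (Set.range u)) (t := Submodule.span 𝕜 (Set.range w)))
    rw [finrank_span_eq_card hu.linearIndependent, finrank_span_eq_card hw.linearIndependent,
      finrank_euclideanSpace, Fintype.card_coe, Fintype.card_coe] at hdisj
    simpa [Submodule.disjoint_def] using hdisj (by omega)
  obtain ⟨a, hax⟩ := (Submodule.mem_span_range_iff_exists_fun 𝕜).mp hxu
  obtain ⟨b, hbx⟩ := (Submodule.mem_span_range_iff_exists_fun 𝕜).mp hxw
  have hAx : t * ‖x‖ ^ 2 ≤ RCLike.re ⟪toEuclideanLin A x, x⟫_𝕜 := by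
    rw [← hax, hu.norm_sum_smul_sq,
      hu.re_inner_map_sum_smul (fun i => hA.toEuclideanLin_eigenvectorBasis i), mul_sum]
    gcongr with i
    exact (mem_filter.mp i.2).2
  have hCx : RCLike.re ⟪toEuclideanLin C x, x⟫_𝕜 < t * ‖x‖ ^ 2 := by
    obtain ⟨i, hi⟩ : ∃ i, b i ≠ 0 := by
      by_contra! hb
      simp [← hbx, hb] at hx0
    rw [← hbx, hw.norm_sum_smul_sq,
      hw.re_inner_map_sum_smul (fun i => hC.toEuclideanLin_eigenvectorBasis i), mul_sum]
    refine sum_lt_sum (fun j _ => ?_) ⟨i, mem_univ _, ?_⟩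
    · exact mul_le_mul_of_nonneg_right (mem_filter.mp j.2).2.le (by positivity)
    · exact mul_lt_mul_of_pos_right (mem_filter.mp i.2).2 (by positivity)
  have hACx := (isPositive_toEuclideanLin_iff.mpr hAC).re_inner_nonneg_left x
  rw [map_sub, LinearMap.sub_apply, inner_sub_left, map_sub, sub_nonneg] at hACx
  linarith

theorem exists_perm_eigenvalues_le_of_posSemidef_sub {A C : Matrix n n 𝕜} (hA : A.IsHermitian)
    (hC : C.IsHermitian) (hAC : (C - A).PosSemidef) :
    ∃ σ : Equiv.Perm n, ∀ i, hA.eigenvalues i ≤ hC.eigenvalues (σ i) :=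
  Fintype.exists_perm_le_comp_of_card_le
    (hA.card_filter_le_eigenvalues_le_of_posSemidef_sub hC hAC)

theorem det_cfc {A : Matrix n n 𝕜} (hA : A.IsHermitian) (f : ℝ → ℝ) :
    (cfc f A).det = ∏ i, (f (hA.eigenvalues i) : 𝕜) := by
  rw [hA.cfc_eq]
  simp [IsHermitian.cfc, -Unitary.conjStarAlgAut_apply]

theorem re_det_cfc {A : Matrix n n 𝕜} (hA : A.IsHermitian) (f : ℝ → ℝ) :
    RCLike.re (cfc f A).det = ∏ i, f (hA.eigenvalues i) := by
  rw [hA.det_cfc, ← RCLike.ofReal_prod, RCLike.ofReal_re]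

theorem re_det {A : Matrix n n 𝕜} (hA : A.IsHermitian) :
    RCLike.re A.det = ∏ i, hA.eigenvalues i := by
  rw [hA.det_eq_prod_eigenvalues, ← RCLike.ofReal_prod, RCLike.ofReal_re]

end IsHermitian

theorem PosDef.re_det_rpow_add_le [Nonempty n] {A B : Matrix n n 𝕜} (hA : A.PosDef)
    (hB : B.PosDef) :
    RCLike.re A.det ^ (1 / (Fintype.card n : ℝ)) + RCLike.re B.det ^ (1 / (Fintype.card n : ℝ)) ≤
      RCLike.re (A + B).det ^ (1 / (Fintype.card n : ℝ)) := by
  obtain ⟨S, hS, hSS, hSunit⟩ : ∃ S : Matrix n n 𝕜, S.IsHermitian ∧ S * S = A ∧ IsUnit S := by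
    refine ⟨CFC.sqrt A, (CFC.sqrt_nonneg A).posSemidef.1, CFC.sqrt_mul_sqrt_self A, ?_⟩
    rw [isUnit_iff_isUnit_det]
    refine isUnit_of_mul_isUnit_left (y := (CFC.sqrt A).det) ?_
    rw [← det_mul, CFC.sqrt_mul_sqrt_self A, ← isUnit_iff_isUnit_det]
    exact hA.isUnit
  obtain ⟨M, hM, hSMS⟩ : ∃ M : Matrix n n 𝕜, M.PosDef ∧ S * M * S = B := by
    have hSdet := (isUnit_iff_isUnit_det S).mp hSunit
    refine ⟨S⁻¹ * B * S⁻¹, ?_, ?_⟩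
    · have := (isUnit_nonsing_inv_iff.mpr hSunit).posDef_star_left_conjugate_iff.mpr hB
      rwa [star_eq_conjTranspose, hS.inv.eq] at this
    · simp only [← mul_assoc, mul_nonsing_inv _ hSdet, one_mul]
      simp only [mul_assoc, nonsing_inv_mul _ hSdet, mul_one]
  have hone_add : 1 + M = cfc (fun x : ℝ => 1 + x) M := by
    rw [cfc_const_add (1 : ℝ) (fun x => x) M, cfc_id' ℝ M, map_one]
  have hdetB : B.det = A.det * M.det := by
    rw [← hSMS, ← hSS, det_mul, det_mul, det_mul]; ring
  have hdetAB : (A + B).det = A.det * (1 + M).det := by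
    rw [← hSMS, ← hSS, ← add_mul, ← mul_one_add, det_mul, det_mul, det_mul]; ring
  rw [hdetB, hdetAB, hone_add, hM.1.det_cfc, hA.1.det_eq_prod_eigenvalues,
    hM.1.det_eq_prod_eigenvalues]
  simp only [← RCLike.ofReal_prod, ← RCLike.ofReal_mul, RCLike.ofReal_re, ← prod_mul_distrib]
  simpa only [mul_one_add] using Real.geom_mean_add_geom_mean_le_geom_mean_add
    hA.eigenvalues_pos fun i => mul_pos (hA.eigenvalues_pos i) (hM.eigenvalues_pos i)

end Matrix

theorem stmt19_general {n : ℕ} (hn : 0 < n) (A B : Matrix (Fin n) (Fin n) ℂ)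
    (hA : A.PosDef) (hB : B.PosDef)
    (ψ : ℝ → ℝ)
    (hψconv : ConvexOn ℝ (Set.Ici 0) ψ)
    (hψpos : ∀ x ∈ Set.Ici (0 : ℝ), 0 ≤ ψ x) (hψ0 : ψ 0 = 0) :
    A.det.re ^ (1 / (n : ℝ)) + B.det.re ^ (1 / (n : ℝ)) ≤
      (A + B).det.re ^ (1 / (n : ℝ)) ∧
    (cfc ψ A).det.re ^ (1 / (n : ℝ)) + (cfc ψ B).det.re ^ (1 / (n : ℝ)) ≤
      (cfc ψ (A + B)).det.re ^ (1 / (n : ℝ)) := by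
  have : Nonempty (Fin n) := ⟨⟨0, hn⟩⟩
  have hAB := hA.add hB
  have hmink := hA.re_det_rpow_add_le hB
  rw [Fintype.card_fin] at hmink
  refine ⟨hmink, ?_⟩
  obtain ⟨σ, hσ⟩ := hA.1.exists_perm_eigenvalues_le_of_posSemidef_sub hAB.1
    (by simpa using hB.posSemidef)
  obtain ⟨τ, hτ⟩ := hB.1.exists_perm_eigenvalues_le_of_posSemidef_sub hAB.1
    (by simpa using hA.posSemidef)
  rw [hA.1.re_det, hB.1.re_det, hAB.1.re_det] at hmink
  have := hψconv.prod_rpow_add_le_of_le_perm hψpos hψ0 hA.eigenvalues_pos hB.eigenvalues_pos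
    hσ hτ (by positivity) hmink
  rwa [← hA.1.re_det_cfc, ← hB.1.re_det_cfc, ← hAB.1.re_det_cfc] at this

/-- Minkowski determinant inequality `det(A+B)^{1/n} ≥ det(A)^{1/n} + det(B)^{1/n}`
for positive definite `A, B`, and more generally, for any strictly increasing convex
`ψ : [0,∞) → [0,∞)` with `ψ(0) = 0`,
`(det ψ(A+B))^{1/n} ≥ (det ψ(A))^{1/n} + (det ψ(B))^{1/n}`. -/
theorem stmt19 {n : ℕ} (hn : 0 < n) (A B : Matrix (Fin n) (Fin n) ℂ)
    (hA : A.PosDef) (hB : B.PosDef)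
    (ψ : ℝ → ℝ) (hψmono : StrictMonoOn ψ (Set.Ici 0))
    (hψconv : ConvexOn ℝ (Set.Ici 0) ψ)
    (hψpos : ∀ x ∈ Set.Ici (0 : ℝ), 0 ≤ ψ x) (hψ0 : ψ 0 = 0) :
    A.det.re ^ (1 / (n : ℝ)) + B.det.re ^ (1 / (n : ℝ)) ≤
      (A + B).det.re ^ (1 / (n : ℝ)) ∧
    (cfc ψ A).det.re ^ (1 / (n : ℝ)) + (cfc ψ B).det.re ^ (1 / (n : ℝ)) ≤
      (cfc ψ (A + B)).det.re ^ (1 / (n : ℝ)) :=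
  stmt19_general hn A B hA hB ψ hψconv hψpos hψ0
end
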